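/- Let V₁, ..., V_n be independent random variables with continuous CDFs, σ a uniformly random permutation, τ a threshold with p = P(max_i V_i ≤ τ) ∈ (0,1), and T the stopping time of the single-threshold rule at level τ. Then for every i with P(V_i > τ) > 0, P(σ(T) = i | V_i > τ) ≥ (1-p)/(-ln p). -/

import Mathlib

/-!
Let `S` be the (random) set of indices whose value exceeds `τ`. The rule stops at `i` exactly
when `i ∈ S` and `i` comes first among `S` in the random order, and `i` comes first among `S`
for `n! / |S|` permutations. With `q j = P(V j ≤ τ)`, independence therefore gives
`P(σ(T) = i, V i > τ) = (1 - q i) ∑_{S ⊆ [n] \ {i}} ∏_{j ∈ S} (1 - q j) ∏_{j ∉ S} q j / (|S| + 1)`,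
which is `(1 - q i) ∫₀¹ ∏_{j ≠ i} (q j + (1 - q j) x) dx`. Weighted AM-GM,
`q ^ (1 - x) ≤ q + (1 - q) x`, bounds the integrand below by `(∏_{j ≠ i} q j) ^ (1 - x)`,
hence by `p ^ (1 - x)`, whose integral over `[0, 1]` is `(1 - p) / (-log p)`.
-/

open MeasureTheory ProbabilityTheory

/-- Stopping time of the time-threshold algorithm (1-based time): the first time `k ∈ [1,n]`
at which the revealed value `V_{σ(k)}` strictly exceeds the threshold `τ k`, and `n+1`
(meaning "never stops") if no such time exists. -/
noncomputable def stopT {Ω : Type*} {n : ℕ} (V : Fin n → Ω → ℝ) (τ : ℕ → ℝ)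
    (σ : Ω → Equiv.Perm (Fin n)) (ω : Ω) : ℕ :=
  sInf ({k : ℕ | ∃ j : Fin n, (j : ℕ) + 1 = k ∧ τ k < V (σ ω j) ω} ∪ {n + 1})

open Finset

theorem Real.rpow_one_sub_le {a x : ℝ} (ha : 0 ≤ a) (hx₀ : 0 ≤ x) (hx₁ : x ≤ 1) :
    a ^ (1 - x) ≤ a + (1 - a) * x := by
  have := Real.geom_mean_le_arith_mean2_weighted (sub_nonneg.2 hx₁) hx₀ ha zero_le_one
    (sub_add_cancel 1 x)
  rw [Real.one_rpow, mul_one] at this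
  linarith

theorem integral_rpow_one_sub {p : ℝ} (hp₀ : 0 < p) (hp₁ : p ≠ 1) :
    ∫ x in (0 : ℝ)..1, p ^ (1 - x) = (1 - p) / -Real.log p := by
  have hlog : Real.log p ≠ 0 := Real.log_ne_zero_of_pos_of_ne_one hp₀ hp₁
  have hderiv : ∀ x ∈ Set.uIcc (0 : ℝ) 1,
      HasDerivAt (fun x => p ^ (1 - x) / -Real.log p) (p ^ (1 - x)) x := by
    intro x _
    have h := (((hasDerivAt_id' x).const_sub 1).const_rpow hp₀).div_const (-Real.log p)
    rwa [mul_neg_one, neg_mul, neg_div_neg_eq, mul_div_cancel_left₀ _ hlog] at h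
  have hcont : Continuous fun x : ℝ => p ^ (1 - x) := by
    have := hp₀.ne'
    fun_prop
  rw [intervalIntegral.integral_eq_sub_of_hasDerivAt hderiv (hcont.intervalIntegrable _ _)]
  simp [sub_div]

theorem one_sub_div_neg_log_le_integral_prod {ι : Type*} (s : Finset ι) {a : ι → ℝ}
    (ha : ∀ j ∈ s, 0 ≤ a j) {p : ℝ} (hp₀ : 0 < p) (hp₁ : p < 1) (hps : p ≤ ∏ j ∈ s, a j) :
    (1 - p) / -Real.log p ≤ ∫ x in (0 : ℝ)..1, ∏ j ∈ s, (a j + (1 - a j) * x) := by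
  have hcont : Continuous fun x : ℝ => p ^ (1 - x) := by
    have := hp₀.ne'
    fun_prop
  rw [← integral_rpow_one_sub hp₀ hp₁.ne]
  refine intervalIntegral.integral_mono_on zero_le_one (hcont.intervalIntegrable _ _)
    ((by fun_prop : Continuous _).intervalIntegrable _ _) fun x ⟨hx₀, hx₁⟩ => ?_
  calc p ^ (1 - x) ≤ (∏ j ∈ s, a j) ^ (1 - x) := by gcongr
    _ = ∏ j ∈ s, a j ^ (1 - x) := (Real.finsetProd_rpow s a ha _).symm
    _ ≤ ∏ j ∈ s, (a j + (1 - a j) * x) :=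
      prod_le_prod (fun j hj => Real.rpow_nonneg (ha j hj) _)
        fun j hj => Real.rpow_one_sub_le (ha j hj) hx₀ hx₁

theorem sum_powerset_prod_div_card_add_one {ι : Type*} [DecidableEq ι] (s : Finset ι)
    (a : ι → ℝ) :
    ∑ S ∈ s.powerset, (∏ j ∈ S, (1 - a j)) * (∏ j ∈ s \ S, a j) / (#S + 1) =
      ∫ x in (0 : ℝ)..1, ∏ j ∈ s, (a j + (1 - a j) * x) := by
  have hterm : ∀ S : Finset ι, (∏ j ∈ S, (1 - a j)) * (∏ j ∈ s \ S, a j) / (#S + 1) =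
      ∫ x in (0 : ℝ)..1, (∏ j ∈ S, (1 - a j) * x) * ∏ j ∈ s \ S, a j := by
    intro S
    simp only [prod_mul_distrib, prod_const, intervalIntegral.integral_mul_const,
      intervalIntegral.integral_const_mul, integral_pow]
    ring
  simp_rw [hterm, add_comm (a _), prod_add]
  rw [intervalIntegral.integral_finsetSum fun S _ =>
    (by fun_prop : Continuous _).intervalIntegrable _ _]

theorem sum_filter_mem_powerset_insert {ι M : Type*} [DecidableEq ι] [AddCommMonoid M]
    {s : Finset ι} {i : ι} (hi : i ∉ s) (f : Finset ι → M) :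
    ∑ S ∈ (insert i s).powerset with i ∈ S, f S = ∑ S ∈ s.powerset, f (insert i S) := by
  rw [sum_filter, sum_powerset_insert hi,
    sum_congr rfl fun S hS => if_neg fun h => hi (mem_powerset.1 hS h)]
  simp

theorem sum_filter_mem_powerset_prod_div_card {ι : Type*} [DecidableEq ι] {s : Finset ι}
    {i : ι} (hi : i ∉ s) (a : ι → ℝ) :
    ∑ S ∈ (insert i s).powerset with i ∈ S,
        (∏ j ∈ S, (1 - a j)) * (∏ j ∈ insert i s \ S, a j) / #S =
      (1 - a i) * ∫ x in (0 : ℝ)..1, ∏ j ∈ s, (a j + (1 - a j) * x) := by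
  rw [sum_filter_mem_powerset_insert hi, ← sum_powerset_prod_div_card_add_one, mul_sum]
  refine sum_congr rfl fun S hS => ?_
  have hiS : i ∉ S := fun h => hi (mem_powerset.1 hS h)
  rw [prod_insert hiS, insert_sdiff_insert, sdiff_insert_of_notMem hi, card_insert_of_notMem hiS]
  push_cast
  ring

theorem card_filter_forall_perm_inv_le_mul_card {α : Type*} [Fintype α] [LinearOrder α]
    {S : Finset α} {i : α} (hi : i ∈ S) :
    #{π : Equiv.Perm α | ∀ j ∈ S, π⁻¹ i ≤ π⁻¹ j} * #S = (Fintype.card α).factorial := by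
  set P : α → Finset (Equiv.Perm α) := fun a => {π | ∀ j ∈ S, π⁻¹ a ≤ π⁻¹ j}
  have hswap : ∀ a ∈ S, ∀ π, π ∈ P a ↔ Equiv.swap a i * π ∈ P i := by
    intro a ha π
    have hS : ∀ j ∈ S, Equiv.swap a i j ∈ S := fun j hj => by
      rcases eq_or_ne j a with rfl | hja
      · simpa
      rcases eq_or_ne j i with rfl | hji
      · simpa
      · rwa [Equiv.swap_apply_of_ne_of_ne hja hji]
    simp only [P, mem_filter, mem_univ, true_and, mul_inv_rev, Equiv.swap_inv,
      Equiv.Perm.mul_apply, Equiv.swap_apply_right]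
    constructor
    · exact fun h j hj => h _ (hS j hj)
    · intro h j hj
      simpa using h _ (hS j hj)
  have hcard : ∀ a ∈ S, #(P a) = #(P i) := fun a ha =>
    card_equiv (Equiv.mulLeft (Equiv.swap a i)) (hswap a ha)
  have hdisj : (S : Set α).PairwiseDisjoint P := by
    intro a ha b hb hab
    refine disjoint_left.2 fun π hπa hπb => hab (π⁻¹.injective ?_)
    simp only [P, mem_filter, mem_univ, true_and] at hπa hπb
    exact le_antisymm (hπa b hb) (hπb a ha)
  have hcover : S.biUnion P = univ := eq_univ_of_forall fun π => by
    obtain ⟨a, ha, hmin⟩ := S.exists_min_image (fun j => π⁻¹ j) ⟨i, hi⟩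
    exact mem_biUnion.2 ⟨a, ha, by simpa [P] using hmin⟩
  have h := card_biUnion hdisj
  rw [hcover, card_univ, Fintype.card_perm, sum_congr rfl hcard, sum_const, smul_eq_mul] at h
  rw [h, mul_comm]

theorem sum_filter_forall_perm_inv_le_mul {α : Type*} [Fintype α] [LinearOrder α] (i : α)
    (g : Finset α → ℝ) :
    ∑ x ∈ (univ : Finset (Finset α × Equiv.Perm α)) with i ∈ x.1 ∧ ∀ j ∈ x.1, x.2⁻¹ i ≤ x.2⁻¹ j,
        ((Fintype.card α).factorial : ℝ)⁻¹ * g x.1 =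
      ∑ S ∈ (univ : Finset α).powerset with i ∈ S, g S / #S := by
  rw [sum_filter, sum_filter, Fintype.sum_prod_type, powerset_univ]
  refine sum_congr rfl fun S _ => ?_
  split_ifs with hiS
  · simp only [hiS, true_and]
    rw [← sum_filter, sum_const, nsmul_eq_mul]
    have hcard : (#{π : Equiv.Perm α | ∀ j ∈ S, π⁻¹ i ≤ π⁻¹ j} : ℝ) * #S =
        (Fintype.card α).factorial := by
      exact_mod_cast card_filter_forall_perm_inv_le_mul_card hiS
    have hS : (#S : ℝ) ≠ 0 := by exact_mod_cast (card_pos.2 ⟨i, hiS⟩).ne'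
    have hF : ((Fintype.card α).factorial : ℝ) ≠ 0 := by positivity
    field_simp
    linear_combination g S * hcard
  · simp [hiS]

theorem exists_stopT_eq_iff {Ω : Type*} {n : ℕ} (V : Fin n → Ω → ℝ) (τ : ℝ)
    (σ : Ω → Equiv.Perm (Fin n)) (ω : Ω) {i : Fin n} (hi : τ < V i ω) :
    (∃ j : Fin n, (j : ℕ) + 1 = stopT V (fun _ => τ) σ ω ∧ σ ω j = i) ↔
      ∀ j, τ < V j ω → (σ ω)⁻¹ i ≤ (σ ω)⁻¹ j := by
  set K := {k : ℕ | ∃ j : Fin n, (j : ℕ) + 1 = k ∧ τ < V (σ ω j) ω} ∪ {n + 1}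
  have hmem : ∀ j, τ < V j ω → ((σ ω)⁻¹ j : ℕ) + 1 ∈ K := fun j hj =>
    Or.inl ⟨_, rfl, by simpa using hj⟩
  change (∃ j : Fin n, (j : ℕ) + 1 = sInf K ∧ σ ω j = i) ↔ _
  calc (∃ j : Fin n, (j : ℕ) + 1 = sInf K ∧ σ ω j = i)
      ↔ ((σ ω)⁻¹ i : ℕ) + 1 = sInf K :=
        ⟨by rintro ⟨j, hj, rfl⟩; simpa using hj, fun h => ⟨_, h, by simp⟩⟩
    _ ↔ IsLeast K (((σ ω)⁻¹ i : ℕ) + 1) :=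
        ⟨fun h => h ▸ ⟨Nat.sInf_mem ⟨_, hmem i hi⟩, fun m hm => Nat.sInf_le hm⟩,
          fun h => h.csInf_eq.symm⟩
    _ ↔ ∀ j, τ < V j ω → (σ ω)⁻¹ i ≤ (σ ω)⁻¹ j := by
      rw [IsLeast, and_iff_right (hmem i hi), mem_lowerBounds]
      refine ⟨fun h j hj => Fin.le_iff_val_le_val.2 (by linarith [h _ (hmem j hj)]), ?_⟩
      rintro h m (⟨j, rfl, hj⟩ | hm)
      · have := Fin.le_iff_val_le_val.1 (h _ hj)
        simp only [Equiv.Perm.coe_inv, Equiv.symm_apply_apply] at this ⊢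
        omega
      · simp [Set.mem_singleton_iff.1 hm]

theorem measureReal_lt_eq_one_sub {Ω : Type*} [MeasurableSpace Ω] {μ : Measure Ω}
    [IsProbabilityMeasure μ] {f : Ω → ℝ} (hf : Measurable f) (τ : ℝ) :
    μ.real {ω | τ < f ω} = 1 - μ.real {ω | f ω ≤ τ} := by
  have hcompl : {ω | τ < f ω} = (f ⁻¹' Set.Iic τ)ᶜ := by
    ext ω
    simp
  rw [hcompl, probReal_compl_eq_one_sub (hf measurableSet_Iic)]
  rfl

section Exceedance

variable {ι : Type*} [Fintype ι] [DecidableEq ι]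

noncomputable def exceedSet (τ : ℝ) (v : ι → ℝ) : Finset ι := {j | τ < v j}

theorem setOf_exceedSet_eq (τ : ℝ) (S : Finset ι) :
    {v : ι → ℝ | exceedSet τ v = S} =
      Set.univ.pi fun j => if j ∈ S then Set.Ioi τ else Set.Iic τ := by
  ext v
  simp only [Set.mem_univ_pi, Finset.ext_iff, exceedSet, mem_filter, mem_univ, true_and]
  refine forall_congr' fun j => ?_
  split_ifs with hj <;> simp [hj]

theorem measurableSet_setOf_exceedSet_eq (τ : ℝ) (S : Finset ι) :
    MeasurableSet {v : ι → ℝ | exceedSet τ v = S} := by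
  rw [setOf_exceedSet_eq]
  exact MeasurableSet.univ_pi fun j => by split_ifs <;> measurability

theorem measureReal_exceedSet_eq {Ω : Type*} [MeasurableSpace Ω]
    {μ : Measure Ω} [IsProbabilityMeasure μ] {V : ι → Ω → ℝ} (hV : ∀ j, Measurable (V j))
    (hVind : iIndepFun V μ) (τ : ℝ) (S : Finset ι) :
    μ.real {ω | exceedSet τ (fun j => V j ω) = S} =
      (∏ j ∈ S, (1 - μ.real {ω | V j ω ≤ τ})) * ∏ j ∈ univ \ S, μ.real {ω | V j ω ≤ τ} := by
  have hset : {ω | exceedSet τ (fun j => V j ω) = S} =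
      ⋂ j, V j ⁻¹' if j ∈ S then Set.Ioi τ else Set.Iic τ := by
    ext ω
    simpa [-Set.mem_ite_empty_right] using
      congrArg (fun A => (fun j => V j ω) ∈ A) (setOf_exceedSet_eq τ S)
  rw [hset, measureReal_def, hVind.meas_iInter fun j => ⟨_, by split_ifs <;> measurability, rfl⟩,
    ENNReal.toReal_prod]
  have h := prod_piecewise univ S (fun j => 1 - μ.real {ω | V j ω ≤ τ})
    (fun j => μ.real {ω | V j ω ≤ τ})
  rw [univ_inter] at h
  rw [← h]
  refine prod_congr rfl fun j _ => ?_
  by_cases hj : j ∈ S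
  · rw [if_pos hj, piecewise_eq_of_mem _ _ _ hj]
    exact measureReal_lt_eq_one_sub (hV j) τ
  · rw [if_neg hj, piecewise_eq_of_notMem _ _ _ hj]
    rfl

end Exceedance

theorem measureReal_stopT_eq_sum {Ω : Type*} [MeasurableSpace Ω] {μ : Measure Ω}
    [IsFiniteMeasure μ] {n : ℕ} {V : Fin n → Ω → ℝ} (hV : ∀ j, Measurable (V j))
    {σ : Ω → Equiv.Perm (Fin n)} (hσmeas : ∀ π, MeasurableSet {ω | σ ω = π})
    (hσunif : ∀ π, μ {ω | σ ω = π} = ((n.factorial : ENNReal))⁻¹)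
    (hσV : ∀ (π : Equiv.Perm (Fin n)) (A : Set (Fin n → ℝ)), MeasurableSet A →
      μ ({ω | σ ω = π} ∩ {ω | (fun i => V i ω) ∈ A})
        = μ {ω | σ ω = π} * μ {ω | (fun i => V i ω) ∈ A})
    (τ : ℝ) (i : Fin n) :
    μ.real ({ω | ∃ j : Fin n, (j : ℕ) + 1 = stopT V (fun _ => τ) σ ω ∧ σ ω j = i}
        ∩ {ω | τ < V i ω}) =
      ∑ S ∈ (univ : Finset (Fin n)).powerset with i ∈ S,
        μ.real {ω | exceedSet τ (fun j => V j ω) = S} / #S := by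
  set f : Ω → Finset (Fin n) × Equiv.Perm (Fin n) := fun ω =>
    (exceedSet τ (fun j => V j ω), σ ω)
  set G : Finset (Finset (Fin n) × Equiv.Perm (Fin n)) :=
    {x | i ∈ x.1 ∧ ∀ j ∈ x.1, x.2⁻¹ i ≤ x.2⁻¹ j}
  have hevent : {ω | ∃ j : Fin n, (j : ℕ) + 1 = stopT V (fun _ => τ) σ ω ∧ σ ω j = i}
      ∩ {ω | τ < V i ω} = f ⁻¹' G := by
    ext ω
    simp only [Set.mem_inter_iff, Set.mem_preimage, mem_coe, mem_filter,
      mem_univ, true_and, f, G, exceedSet]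
    rw [and_comm]
    exact and_congr_right fun hi => exists_stopT_eq_iff V τ σ ω hi
  have hfibre_eq : ∀ x : Finset (Fin n) × Equiv.Perm (Fin n), f ⁻¹' {x} =
      {ω | σ ω = x.2} ∩ {ω | (fun j => V j ω) ∈ {v | exceedSet τ v = x.1}} := by
    rintro ⟨S, π⟩
    ext ω
    simp [f, and_comm]
  have hfibre : ∀ x, μ.real (f ⁻¹' {x}) =
      (n.factorial : ℝ)⁻¹ * μ.real {ω | exceedSet τ (fun j => V j ω) = x.1} := by
    intro x
    rw [hfibre_eq, measureReal_def, hσV _ _ (measurableSet_setOf_exceedSet_eq τ x.1), hσunif,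
      ENNReal.toReal_mul, ENNReal.toReal_inv, ENNReal.toReal_natCast]
    rfl
  have hV' : Measurable fun ω j => V j ω := measurable_pi_lambda _ hV
  rw [hevent, ← sum_measureReal_preimage_singleton G fun x _ => by
    rw [hfibre_eq]; exact (hσmeas _).inter (hV' (measurableSet_setOf_exceedSet_eq τ x.1))]
  simp_rw [hfibre]
  rw [← sum_filter_forall_perm_inv_le_mul i, Fintype.card_fin]
  -- the two filters differ only in their decidability instances
  convert rfl

theorem stmt10_general {Ω : Type*} [MeasurableSpace Ω] (μ : Measure Ω) [IsProbabilityMeasure μ]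
    (n : ℕ) (V : Fin n → Ω → ℝ)
    (hVmeas : ∀ i, Measurable (V i))
    (hVindep : iIndepFun V μ)
    (σ : Ω → Equiv.Perm (Fin n))
    (hσmeas : ∀ π, MeasurableSet {ω | σ ω = π})
    (hσunif : ∀ π, μ {ω | σ ω = π} = ((n.factorial : ENNReal))⁻¹)
    (hindep : ∀ (π : Equiv.Perm (Fin n)) (A : Set (Fin n → ℝ)), MeasurableSet A →
      μ ({ω | σ ω = π} ∩ {ω | (fun i => V i ω) ∈ A})
        = μ {ω | σ ω = π} * μ {ω | (fun i => V i ω) ∈ A})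
    (τ0 : ℝ)
    (p : ℝ) (hp : p = (μ {ω | ∀ i, V i ω ≤ τ0}).toReal) (hp0 : 0 < p) (hp1 : p < 1)
    (i : Fin n) (hi : 0 < (μ {ω | τ0 < V i ω}).toReal) :
    (μ ({ω | ∃ j : Fin n, (j : ℕ) + 1 = stopT V (fun _ => τ0) σ ω ∧ σ ω j = i}
          ∩ {ω | τ0 < V i ω})).toReal / (μ {ω | τ0 < V i ω}).toReal
      ≥ (1 - p) / (-Real.log p) := by
  set q : Fin n → ℝ := fun j => μ.real {ω | V j ω ≤ τ0}
  have hq0 : ∀ j, 0 ≤ q j := fun j => measureReal_nonneg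
  have hE := measureReal_exceedSet_eq hVmeas hVindep τ0
  have hpq : p = ∏ j, q j := by
    have hall : {ω | ∀ j, V j ω ≤ τ0} = {ω | exceedSet τ0 (fun j => V j ω) = ∅} := by
      ext ω
      simp [exceedSet, filter_eq_empty_iff]
    rw [hp, ← measureReal_def, hall, hE]
    simp [q]
  have hpi : p ≤ ∏ j ∈ univ.erase i, q j := by
    rw [hpq, ← mul_prod_erase univ q (mem_univ i)]
    exact mul_le_of_le_one_left (prod_nonneg fun j _ => hq0 j) measureReal_le_one
  have hnum := sum_filter_mem_powerset_prod_div_card (notMem_erase i univ) q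
  rw [insert_erase (mem_univ i)] at hnum
  have hqi : 0 < 1 - q i := by rwa [← measureReal_lt_eq_one_sub (hVmeas i)]
  rw [← measureReal_def, ← measureReal_def, measureReal_stopT_eq_sum hVmeas hσmeas hσunif hindep,
    measureReal_lt_eq_one_sub (hVmeas i)]
  simp_rw [hE]
  rw [hnum, mul_div_cancel_left₀ _ hqi.ne', ge_iff_le]
  exact one_sub_div_neg_log_le_integral_prod _ (fun j _ => hq0 j) hp0 hp1 hpi

theorem stmt10 {Ω : Type*} [MeasurableSpace Ω] (μ : Measure Ω) [IsProbabilityMeasure μ]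
    (n : ℕ) (hn : 0 < n) (V : Fin n → Ω → ℝ)
    (hVmeas : ∀ i, Measurable (V i))
    (hVcont : ∀ i, Continuous (fun t => (μ {ω | V i ω ≤ t}).toReal))
    (hVindep : iIndepFun V μ)
    (σ : Ω → Equiv.Perm (Fin n))
    (hσmeas : ∀ π, MeasurableSet {ω | σ ω = π})
    (hσunif : ∀ π, μ {ω | σ ω = π} = ((n.factorial : ENNReal))⁻¹)
    (hindep : ∀ (π : Equiv.Perm (Fin n)) (A : Set (Fin n → ℝ)), MeasurableSet A →
      μ ({ω | σ ω = π} ∩ {ω | (fun i => V i ω) ∈ A})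
        = μ {ω | σ ω = π} * μ {ω | (fun i => V i ω) ∈ A})
    (τ0 : ℝ)
    (p : ℝ) (hp : p = (μ {ω | ∀ i, V i ω ≤ τ0}).toReal) (hp0 : 0 < p) (hp1 : p < 1)
    (i : Fin n) (hi : 0 < (μ {ω | τ0 < V i ω}).toReal) :
    (μ ({ω | ∃ j : Fin n, (j : ℕ) + 1 = stopT V (fun _ => τ0) σ ω ∧ σ ω j = i}
          ∩ {ω | τ0 < V i ω})).toReal / (μ {ω | τ0 < V i ω}).toReal
      ≥ (1 - p) / (-Real.log p) :=
  stmt10_general μ n V hVmeas hVindep σ hσmeas hσunif hindep τ0 p hp hp0 hp1 i hi
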